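/- The one-dimensional normalized Hermite polynomials satisfy the product formula H_n^c(x) H_m^c(x) = Σ_{r ≤ min(n,m)} Θ(n,m,r) H_{n+m-2r}^c(x), where Θ(n,m,r) = [C(n,r) C(m,r) C(n+m-2r, n-r)]^{1/2} and C denotes binomial coefficients. -/

import Mathlib

/-- Normalized one-dimensional Hermite polynomial. -/
noncomputable def hermiteC (c : ℝ) (n : ℕ) (x : ℝ) : ℝ :=
  (1 / (Real.sqrt (c ^ n) * Real.sqrt (Nat.factorial n))) *
    Real.exp (c * x ^ 2 / 2) * iteratedDeriv n (fun y => Real.exp (-c * y ^ 2 / 2)) x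

/-- `Θ(n,m,r) = (C(n,r) C(m,r) C(n+m-2r, n-r))^{1/2}`. -/
noncomputable def Theta (n m r : ℕ) : ℝ :=
  Real.sqrt ((Nat.choose n r * Nat.choose m r * Nat.choose (n + m - 2 * r) (n - r) : ℕ))

namespace HermiteProductAux

open Polynomial Finset

lemma deriv_hermite : ∀ n : ℕ, derivative (hermite (n+1)) = ((n:Polynomial ℤ) + 1) * hermite n
  | 0 => by simp [hermite_one, hermite_zero]
  | 1 => by
    rw [hermite_succ, hermite_one]
    simp [hermite_one]
    ring
  | (n+2) => by
    have h1 := deriv_hermite (n+1)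
    have h0 := deriv_hermite n
    rw [hermite_succ (n+2), derivative_sub, derivative_mul, derivative_X, h1, derivative_mul]
    rw [h0]
    rw [hermite_succ (n+1)]
    rw [h0]
    simp only [derivative_add, derivative_natCast, derivative_one]
    push_cast
    ring

lemma deriv_hermite' (m : ℕ) : derivative (hermite m) = (m : Polynomial ℤ) * hermite (m - 1) := by
  cases m with
  | zero => simp [hermite_zero]
  | succ k => rw [deriv_hermite k]; push_cast; ring_nf

def acoef (n m r : ℕ) : ℕ := r.factorial * n.choose r * m.choose r

lemma acoef_rec (n m : ℕ) : ∀ r : ℕ, acoef (n+1) m r =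
    acoef n m r + (if r = 0 then 0 else m * acoef n (m-1) (r-1))
  | 0 => by simp [acoef]
  | (s+1) => by
    simp only [acoef, if_neg (Nat.succ_ne_zero s), Nat.add_sub_cancel]
    rw [Nat.choose_succ_succ n s]
    cases m with
    | zero => simp [Nat.choose_eq_zero_of_lt (Nat.succ_pos s)]
    | succ m' =>
      have h := Nat.add_one_mul_choose_eq m' s
      simp only [Nat.succ_eq_add_one, Nat.add_sub_cancel]
      rw [Nat.factorial_succ]
      zify at h ⊢
      linear_combination (-(s.factorial * n.choose s : ℤ)) * h

lemma hermite_mul (n : ℕ) : ∀ m : ℕ, hermite n * hermite m =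
    ∑ r ∈ Finset.range (n+1), (acoef n m r : Polynomial ℤ) * hermite (n + m - 2*r) := by
  induction n with
  | zero => intro m; simp [acoef]
  | succ n ih =>
    intro m
    have e1 : hermite (n+1) * hermite m
        = X * (hermite n * hermite m) - derivative (hermite n * hermite m)
          + hermite n * derivative (hermite m) := by
      rw [hermite_succ, derivative_mul]; ring
    rw [e1, deriv_hermite' m]
    rw [show hermite n * ((m : Polynomial ℤ) * hermite (m-1))
        = (m : Polynomial ℤ) * (hermite n * hermite (m-1)) by ring]
    rw [ih m, ih (m-1)]
    rw [derivative_sum]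
    rw [Finset.mul_sum, Finset.mul_sum, ← Finset.sum_sub_distrib]
    have lhs1 : ∀ r ∈ Finset.range (n+1),
        X * ((acoef n m r : Polynomial ℤ) * hermite (n + m - 2*r))
          - derivative ((acoef n m r : Polynomial ℤ) * hermite (n + m - 2*r))
        = (acoef n m r : Polynomial ℤ) * hermite (n + 1 + m - 2*r) := by
      intro r hr
      rw [derivative_mul, derivative_natCast, zero_mul, zero_add]
      by_cases hrm : r ≤ m
      · have : n + 1 + m - 2*r = (n + m - 2*r) + 1 := by
          simp only [Finset.mem_range] at hr; omega
        rw [this, hermite_succ]; ring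
      · have : m.choose r = 0 := Nat.choose_eq_zero_of_lt (by omega)
        simp [acoef, this]
    rw [Finset.sum_congr rfl lhs1]
    have rhs : ∑ r ∈ Finset.range (n+1+1), (acoef (n+1) m r : Polynomial ℤ) * hermite (n+1+m-2*r)
        = ∑ r ∈ Finset.range (n+1+1), ((acoef n m r : Polynomial ℤ) * hermite (n+1+m-2*r)
            + ((if r = 0 then 0 else (m * acoef n (m-1) (r-1) : ℕ)) : Polynomial ℤ)
              * hermite (n+1+m-2*r)) := by
      apply Finset.sum_congr rfl
      intro r _
      rw [acoef_rec n m r]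
      split <;> push_cast <;> ring
    rw [rhs, Finset.sum_add_distrib]
    congr 1
    · symm
      rw [Finset.sum_range_succ]
      simp [acoef, Nat.choose_eq_zero_of_lt (Nat.lt_succ_self n)]
    · symm
      rw [Finset.sum_range_succ']
      simp only [Nat.add_eq_zero, one_ne_zero, and_false, if_false, if_pos rfl, Nat.cast_zero,
        zero_mul, add_zero, Nat.add_sub_cancel, Nat.cast_ite, Nat.cast_mul, if_true]
      apply Finset.sum_congr rfl
      intro r hr
      simp only [Finset.mem_range] at hr
      cases m with
      | zero => simp
      | succ m' =>
        have h2 : n + 1 + (m'+1) - 2*(r+1) = n + (m'+1-1) - 2*r := by omega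
        rw [h2]
        push_cast
        ring

lemma hermite_mul_real (n m : ℕ) (t : ℝ) :
    (Polynomial.aeval t (hermite n)) * Polynomial.aeval t (hermite m) =
    ∑ r ∈ Finset.range (min n m + 1),
      (acoef n m r : ℝ) * Polynomial.aeval t (hermite (n + m - 2*r)) := by
  have h := congrArg (fun p : Polynomial ℤ => (Polynomial.aeval (R := ℤ) (A := ℝ) t) p) (hermite_mul n m)
  simp only [map_mul, map_sum, map_natCast] at h
  rw [h]
  symm
  apply Finset.sum_subset
  · exact Finset.range_subset_range.mpr (by omega)
  · intro r hr hr2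
    simp only [Finset.mem_range] at hr hr2
    have : m < r := by omega
    simp [acoef, Nat.choose_eq_zero_of_lt this]

lemma hermiteC_eq (c : ℝ) (hc : 0 < c) (n : ℕ) (x : ℝ) :
    hermiteC c n x = (-1:ℝ)^n / Real.sqrt n.factorial
      * Polynomial.aeval (Real.sqrt c * x) (hermite n) := by
  have hg : ContDiff ℝ n (fun y : ℝ => Real.exp (-(y^2/2))) :=
    (Real.contDiff_exp.comp (((contDiff_id.pow 2).div_const 2).neg)).of_le le_top
  have hfun : (fun y : ℝ => Real.exp (-c * y ^ 2 / 2))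
      = fun y : ℝ => (fun z : ℝ => Real.exp (-(z^2/2))) (Real.sqrt c * y) := by
    funext y
    simp only [mul_pow, Real.sq_sqrt hc.le]
    ring_nf
  have hit : iteratedDeriv n (fun y => Real.exp (-c * y ^ 2 / 2)) x
      = Real.sqrt c ^ n * iteratedDeriv n (fun z : ℝ => Real.exp (-(z^2/2))) (Real.sqrt c * x) := by
    rw [hfun, iteratedDeriv_comp_const_mul hg]
  have hsq : Real.sqrt (c ^ n) = Real.sqrt c ^ n := by
    rw [show c ^ n = (Real.sqrt c ^ n)^2 by
      rw [← pow_mul, mul_comm n 2, pow_mul, Real.sq_sqrt hc.le]]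
    exact Real.sqrt_sq (pow_nonneg (Real.sqrt_nonneg c) n)
  have hgauss := Polynomial.deriv_gaussian_eq_hermite_mul_gaussian n (Real.sqrt c * x)
  rw [← iteratedDeriv_eq_iterate] at hgauss
  rw [hermiteC, hit, hgauss, hsq]
  have hsc : Real.sqrt c ^ n ≠ 0 := pow_ne_zero _ (ne_of_gt (Real.sqrt_pos.mpr hc))
  have hfact : Real.sqrt (n.factorial : ℝ) ≠ 0 :=
    ne_of_gt (Real.sqrt_pos.mpr (by exact_mod_cast n.factorial_pos))
  have hsq2 : (Real.sqrt c * x) ^ 2 = c * x ^ 2 := by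
    rw [mul_pow, Real.sq_sqrt hc.le]
  rw [hsq2]
  have hexp : Real.exp (c * x ^ 2 / 2) * Real.exp (-(c * x ^ 2 / 2)) = 1 := by
    rw [← Real.exp_add]
    ring_nf
    exact Real.exp_zero
  field_simp
  linear_combination ((Polynomial.aeval (x * Real.sqrt c)) (hermite n)) * hexp

lemma nat_id_real (n m r : ℕ) (hrn : r ≤ n) (hrm : r ≤ m) :
    ((n.choose r * m.choose r * ((n + m - 2*r).choose (n - r)) : ℕ) : ℝ)
      * ((n.factorial : ℝ) * (m.factorial : ℝ))
    = ((acoef n m r : ℕ) : ℝ)^2 * ((n + m - 2*r).factorial : ℝ) := by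
  have hk : n + m - 2*r = (n - r) + (m - r) := by omega
  rw [hk, acoef]
  push_cast
  rw [Nat.cast_choose ℝ hrn, Nat.cast_choose ℝ hrm,
    Nat.cast_choose ℝ (Nat.le_add_right (n-r) (m-r)), Nat.add_sub_cancel_left]
  have h1 : (r.factorial : ℝ) ≠ 0 := by exact_mod_cast r.factorial_ne_zero
  have h2 : ((n-r).factorial : ℝ) ≠ 0 := by exact_mod_cast (n-r).factorial_ne_zero
  have h3 : ((m-r).factorial : ℝ) ≠ 0 := by exact_mod_cast (m-r).factorial_ne_zero
  field_simp

lemma theta_eq (n m r : ℕ) (hrn : r ≤ n) (hrm : r ≤ m) :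
    Theta n m r * (Real.sqrt n.factorial * Real.sqrt m.factorial) =
    (acoef n m r : ℝ) * Real.sqrt ((n + m - 2*r).factorial) := by
  have h1 : Real.sqrt (n.factorial:ℝ) * Real.sqrt (m.factorial:ℝ)
      = Real.sqrt ((n.factorial:ℝ) * (m.factorial:ℝ)) := (Real.sqrt_mul (by positivity) _).symm
  rw [Theta, h1, ← Real.sqrt_mul (by positivity)]
  rw [show (acoef n m r : ℝ) = Real.sqrt (((acoef n m r : ℕ) : ℝ)^2) from
    (Real.sqrt_sq (by positivity)).symm, ← Real.sqrt_mul (by positivity)]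
  congr 1
  exact nat_id_real n m r hrn hrm

end HermiteProductAux

open HermiteProductAux Polynomial in
theorem hermite_product_formula (c : ℝ) (hc : 0 < c) (n m : ℕ) (x : ℝ) :
    hermiteC c n x * hermiteC c m x =
      ∑ r ∈ Finset.range (min n m + 1), Theta n m r * hermiteC c (n + m - 2 * r) x := by
  rw [hermiteC_eq c hc n x, hermiteC_eq c hc m x]
  set t := Real.sqrt c * x with ht
  have key := hermite_mul_real n m t
  have hfn : Real.sqrt (n.factorial : ℝ) ≠ 0 :=
    ne_of_gt (Real.sqrt_pos.mpr (by exact_mod_cast n.factorial_pos))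
  have hfm : Real.sqrt (m.factorial : ℝ) ≠ 0 :=
    ne_of_gt (Real.sqrt_pos.mpr (by exact_mod_cast m.factorial_pos))
  calc ((-1:ℝ)^n / Real.sqrt n.factorial * aeval t (hermite n))
        * ((-1:ℝ)^m / Real.sqrt m.factorial * aeval t (hermite m))
      = ((-1:ℝ)^(n+m) / (Real.sqrt n.factorial * Real.sqrt m.factorial))
        * (aeval t (hermite n) * aeval t (hermite m)) := by
        rw [pow_add]; ring
    _ = ∑ r ∈ Finset.range (min n m + 1),
        ((-1:ℝ)^(n+m) / (Real.sqrt n.factorial * Real.sqrt m.factorial))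
          * ((acoef n m r : ℝ) * aeval t (hermite (n + m - 2*r))) := by
        rw [key, Finset.mul_sum]
    _ = ∑ r ∈ Finset.range (min n m + 1), Theta n m r * hermiteC c (n + m - 2 * r) x := by
        apply Finset.sum_congr rfl
        intro r hr
        simp only [Finset.mem_range] at hr
        have hrn : r ≤ n := by omega
        have hrm : r ≤ m := by omega
        rw [hermiteC_eq c hc (n + m - 2*r) x, ← ht]
        have hsign : (-1:ℝ)^(n+m-2*r) = (-1:ℝ)^(n+m) := by
          have h2 : n + m - 2*r + 2*r = n + m := by omega
          calc (-1:ℝ)^(n+m-2*r) = (-1:ℝ)^(n+m-2*r) * ((-1:ℝ)^2)^r := by norm_num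
            _ = (-1:ℝ)^(n+m-2*r+2*r) := by rw [← pow_mul, ← pow_add]
            _ = (-1:ℝ)^(n+m) := by rw [h2]
        have hth := theta_eq n m r hrn hrm
        have hfk : Real.sqrt (((n+m-2*r).factorial : ℕ) : ℝ) ≠ 0 :=
          ne_of_gt (Real.sqrt_pos.mpr (by exact_mod_cast (n+m-2*r).factorial_pos))
        rw [hsign]
        field_simp
        linear_combination (-(aeval t (hermite (n+m-2*r)))) * hth
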